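/- There exists a stable 2-coloring of pairs f : [ω]² → 2 such that every infinite increasing p-homogeneous set for f computes ∅′ (the halting problem). -/

import Mathlib

open Classical in
noncomputable def chr (A : Set ℕ) : ℕ →. ℕ :=
  fun n => Part.some (if n ∈ A then 1 else 0)

/-- The effective join (recursive union) of two sets: `A ⊕ B`. -/
def setJoin (A B : Set ℕ) : Set ℕ :=
  {n | (n % 2 = 0 ∧ n / 2 ∈ A) ∨ (n % 2 = 1 ∧ n / 2 ∈ B)}

/-- Codes for partial recursive functions relative to an oracle. -/
inductive OCode : Type
  | zero | succ | left | right | oracle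
  | pair (a b : OCode) | comp (a b : OCode)
  | prec (a b : OCode) | rfind' (a : OCode)

/-- Evaluation of an oracle code relative to oracle `O`. -/
def OCode.eval (O : ℕ →. ℕ) : OCode → ℕ →. ℕ
  | .zero => pure 0
  | .succ => Nat.succ
  | .left => fun n : ℕ => n.unpair.1
  | .right => fun n : ℕ => n.unpair.2
  | .oracle => O
  | .pair cf cg => fun n => Nat.pair <$> eval O cf n <*> eval O cg n
  | .comp cf cg => fun n => eval O cg n >>= eval O cf
  | .prec cf cg =>
    Nat.unpaired fun a n =>
      n.rec (eval O cf a) fun y IH => do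
        let i ← IH
        eval O cg (Nat.pair a (Nat.pair y i))
  | .rfind' cf =>
    Nat.unpaired fun a m =>
      (Nat.rfind fun n => (fun m => m = 0) <$> eval O cf (Nat.pair a (n + m))).map (· + m)

/-- `g` is partial recursive in the oracle `O`. -/
def RecIn (O g : ℕ →. ℕ) : Prop := ∃ c : OCode, OCode.eval O c = g

/-- Turing reducibility between sets of naturals. -/
def TuringLE (A B : Set ℕ) : Prop := RecIn (chr B) (chr A)

/-- The halting set `∅′`. -/
def K : Set ℕ := {n | ((Denumerable.ofNat Nat.Partrec.Code n).eval n).Dom}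

/-!
Approximate `∅′` at stage `s` by "program `n` halts on input `n` within `s` steps", and let
`m x` be a stage from which on this approximation is correct on all `i ≤ x`. Colour `(x, u)` by
`1` exactly when `m x ≤ u`; every column is eventually `1`. An increasing p-homogeneous pair
`(H_L, H_R)` cannot have colour `0` (take `y ∈ H_R` beyond `m x`), so the stage-`y`
approximation is correct below `x` whenever `x ∈ H_L`, `y ∈ H_R`, `x < y`. To decide
`n ∈ ∅′`, search `H_L ⊕ H_R` for such a pair with `n ≤ x` and read off the stage-`y` answer.
-/

theorem RecIn.of_recursiveIn {O f : ℕ →. ℕ} (h : Nat.RecursiveIn {O} f) : RecIn O f := by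
  induction h with
  | zero => exact ⟨.zero, rfl⟩
  | succ => exact ⟨.succ, rfl⟩
  | left => exact ⟨.left, rfl⟩
  | right => exact ⟨.right, rfl⟩
  | oracle g hg => exact ⟨.oracle, hg.symm ▸ rfl⟩
  | pair _ _ ihf ihg =>
    obtain ⟨cf, rfl⟩ := ihf; obtain ⟨cg, rfl⟩ := ihg; exact ⟨.pair cf cg, rfl⟩
  | comp _ _ ihf ihg =>
    obtain ⟨cf, rfl⟩ := ihf; obtain ⟨cg, rfl⟩ := ihg; exact ⟨.comp cf cg, rfl⟩
  | prec _ _ ihf ihg =>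
    obtain ⟨cf, rfl⟩ := ihf; obtain ⟨cg, rfl⟩ := ihg; exact ⟨.prec cf cg, rfl⟩
  | rfind _ ihf =>
    obtain ⟨cf, rfl⟩ := ihf
    -- `rfind'` starts its search at the offset `m` of its input `⟪a, m⟫`; take `m = 0`.
    refine ⟨.comp (.rfind' cf) (.pair (.pair .left .right) .zero), funext fun n => ?_⟩
    simp [OCode.eval, Seq.seq, Part.map_id', pure, PFun.pure, Part.bind_some]

theorem TuringLE.of_computableIn {A B : Set ℕ}
    (h : ComputableIn {chr B} (A.indicator 1 : ℕ → ℕ)) : TuringLE A B :=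
  RecIn.of_recursiveIn (RecursiveIn.iff_nat.1 h)

namespace ComputableIn

variable {O : Set (ℕ →. ℕ)} {f g : ℕ → ℕ}

theorem iff_nat : ComputableIn O f ↔ Nat.RecursiveIn O fun n => Part.some (f n) :=
  RecursiveIn.iff_nat

theorem of_computable_nat (hf : Computable f) : ComputableIn O f :=
  iff_nat.2 (Partrec.nat_iff.1 hf).recursiveIn

theorem comp_nat (hf : ComputableIn O f) (hg : ComputableIn O g) : ComputableIn O (f ∘ g) :=
  iff_nat.2 <| ((iff_nat.1 hf).comp (iff_nat.1 hg)).of_eq fun n => by simp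

theorem pair_nat (hf : ComputableIn O f) (hg : ComputableIn O g) :
    ComputableIn O fun n => Nat.pair (f n) (g n) :=
  iff_nat.2 <| ((iff_nat.1 hf).pair (iff_nat.1 hg)).of_eq fun n => by simp [Seq.seq]

theorem comp₂_nat {F : ℕ → ℕ → ℕ} (hF : Computable₂ F) (hf : ComputableIn O f)
    (hg : ComputableIn O g) : ComputableIn O fun n => F (f n) (g n) := by
  have hF' : Computable fun m : ℕ => F m.unpair.1 m.unpair.2 :=
    hF.comp (Computable.fst.comp Computable.unpair) (Computable.snd.comp Computable.unpair)
  simpa [Function.comp_def] using (of_computable_nat hF').comp_nat (hf.pair_nat hg)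

theorem exists_selector_nat {S : Set ℕ} (hS : ComputableIn O (S.indicator 1 : ℕ → ℕ))
    (h : ∀ n, ∃ k, Nat.pair n k ∈ S) :
    ∃ k : ℕ → ℕ, ComputableIn O k ∧ ∀ n, Nat.pair n (k n) ∈ S := by
  classical
  have hS' : ComputableIn O fun n => 1 - S.indicator (1 : ℕ → ℕ) n :=
    (of_computable_nat (Primrec.nat_sub.comp (.const 1) .id).to_comp).comp_nat hS
  refine ⟨fun n => Nat.find (h n), iff_nat.2 <| (iff_nat.1 hS').rfind.of_eq fun n =>
    Part.eq_some_iff.2 <| Nat.mem_rfind.2 ⟨?_, fun hm => ?_⟩, fun n => Nat.find_spec (h n)⟩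
  · simp [Nat.find_spec (h n)]
  · simp [Nat.find_min (h n) hm]

end ComputableIn

theorem computableIn_chr (B : Set ℕ) : ComputableIn {chr B} (B.indicator 1 : ℕ → ℕ) :=
  ComputableIn.iff_nat.2 (.oracle _ rfl)

theorem two_mul_mem_setJoin {A B : Set ℕ} {n : ℕ} : 2 * n ∈ setJoin A B ↔ n ∈ A := by
  simp [setJoin]

theorem two_mul_add_one_mem_setJoin {A B : Set ℕ} {n : ℕ} :
    2 * n + 1 ∈ setJoin A B ↔ n ∈ B := by
  simp [setJoin, Nat.add_mod, Nat.add_div]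

theorem computableIn_join_left (A B : Set ℕ) :
    ComputableIn {chr (setJoin A B)} (A.indicator 1 : ℕ → ℕ) := by
  have h2 : Computable fun n : ℕ => 2 * n := (Primrec.nat_mul.comp (.const 2) .id).to_comp
  convert (computableIn_chr (setJoin A B)).comp_nat (.of_computable_nat h2) using 1
  ext n
  by_cases hn : n ∈ A <;> simp [hn, two_mul_mem_setJoin]

theorem computableIn_join_right (A B : Set ℕ) :
    ComputableIn {chr (setJoin A B)} (B.indicator 1 : ℕ → ℕ) := by
  have h2 : Computable fun n : ℕ => 2 * n + 1 :=
    (Primrec.succ.comp (Primrec.nat_mul.comp (.const 2) .id)).to_comp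
  convert (computableIn_chr (setJoin A B)).comp_nat (.of_computable_nat h2) using 1
  ext n
  by_cases hn : n ∈ B <;> simp [hn, two_mul_add_one_mem_setJoin]

theorem exists_computableIn_setJoin_above {HL HR : Set ℕ} (hL : HL.Infinite)
    (hR : HR.Infinite) :
    ∃ y : ℕ → ℕ, ComputableIn {chr (setJoin HL HR)} y ∧
      ∀ n, y n ∈ HR ∧ ∃ x ∈ HL, n ≤ x ∧ x < y n := by
  -- `w = ⟪n, ⟪a, b⟫⟫` codes the candidate pair `n ≤ x = n + a < y = x + 1 + b`.
  let x : ℕ → ℕ := fun w => w.unpair.1 + w.unpair.2.unpair.1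
  let y : ℕ → ℕ := fun w => x w + 1 + w.unpair.2.unpair.2
  have hx : Primrec x := Primrec.nat_add.comp (Primrec.fst.comp .unpair)
    (Primrec.fst.comp (Primrec.unpair.comp (Primrec.snd.comp .unpair)))
  have hy : Primrec y := Primrec.nat_add.comp (Primrec.succ.comp hx)
    (Primrec.snd.comp (Primrec.unpair.comp (Primrec.snd.comp .unpair)))
  let S : Set ℕ := x ⁻¹' HL ∩ y ⁻¹' HR
  have hS : ComputableIn {chr (setJoin HL HR)} (S.indicator 1 : ℕ → ℕ) := by
    convert ComputableIn.comp₂_nat Primrec.nat_mul.to_comp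
        ((computableIn_join_left HL HR).comp_nat (.of_computable_nat hx.to_comp))
        ((computableIn_join_right HL HR).comp_nat (.of_computable_nat hy.to_comp)) using 1
    ext w
    by_cases hxw : x w ∈ HL <;> by_cases hyw : y w ∈ HR <;> simp [S, hxw, hyw]
  have hS_ex : ∀ n, ∃ k, Nat.pair n k ∈ S := by
    intro n
    obtain ⟨a, ha, hna⟩ := hL.exists_gt n
    obtain ⟨b, hb, hab⟩ := hR.exists_gt a
    refine ⟨Nat.pair (a - n) (b - a - 1), ?_, ?_⟩
    · simpa [x, show n + (a - n) = a by omega] using ha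
    · simpa [y, x, show n + (a - n) + 1 + (b - a - 1) = b by omega] using hb
  obtain ⟨k, hk, hkS⟩ := ComputableIn.exists_selector_nat hS hS_ex
  refine ⟨fun n => y (Nat.pair n (k n)),
    (ComputableIn.of_computable_nat hy.to_comp).comp_nat (ComputableIn.id.pair_nat hk),
    fun n => ⟨(hkS n).2, x (Nat.pair n (k n)), (hkS n).1, by simp [x],
      by simp only [y]; omega⟩⟩

theorem turingLE_setJoin_of_correct_stages {A HL HR : Set ℕ} {g : ℕ → ℕ → Bool}
    (hg : Computable₂ g) (hL : HL.Infinite) (hR : HR.Infinite)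
    (hcorrect : ∀ x ∈ HL, ∀ y ∈ HR, x < y → ∀ i ≤ x, g y i = true ↔ i ∈ A) :
    TuringLE A (setJoin HL HR) := by
  obtain ⟨y, hy, hyR⟩ := exists_computableIn_setJoin_above hL hR
  have hF : Computable₂ fun s n => bif g s n then 1 else 0 :=
    Computable.cond hg (.const 1) (.const 0)
  refine TuringLE.of_computableIn ?_
  convert ComputableIn.comp₂_nat hF hy ComputableIn.id using 1
  ext n
  obtain ⟨hyn, x, hx, hnx, hxy⟩ := hyR n
  have hgn : g (y n) n = true ↔ n ∈ A := hcorrect x hx (y n) hyn hxy n hnx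
  by_cases hn : n ∈ A
  · simp [hn, hgn.2 hn]
  · simp [hn, show g (y n) n = false by simpa [hn] using hgn]

section Modulus

open Filter

variable (g : ℕ → ℕ → Bool) (A : Set ℕ)

noncomputable def settlingModulus (x : ℕ) : ℕ :=
  sInf {s | ∀ t ≥ s, ∀ i ≤ x, g t i = true ↔ i ∈ A}

theorem settlingModulus_spec (hg : ∀ n, ∀ᶠ s in atTop, g s n = true ↔ n ∈ A) {x t : ℕ}
    (ht : settlingModulus g A x ≤ t) : ∀ i ≤ x, g t i = true ↔ i ∈ A :=
  Nat.sInf_mem (eventually_atTop.1 ((Set.finite_Iic x).eventually_all.2 fun i _ => hg i))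
    t ht

noncomputable def settlingColoring (x u : ℕ) : Fin 2 :=
  if settlingModulus g A x ≤ u then 1 else 0

theorem settlingColoring_stable (x : ℕ) :
    ∃ j : Fin 2, ∃ N : ℕ, ∀ u, N ≤ u → settlingColoring g A x u = j :=
  ⟨1, settlingModulus g A x, fun _ hu => if_pos hu⟩

theorem settlingModulus_le_of_homogeneous {HL HR : Set ℕ} (hR : HR.Infinite) {c : Fin 2}
    (hc : ∀ x ∈ HL, ∀ y ∈ HR, x < y → settlingColoring g A x y = c)
    {x y : ℕ} (hx : x ∈ HL) (hy : y ∈ HR) (hxy : x < y) : settlingModulus g A x ≤ y := by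
  obtain ⟨z, hz, hxz⟩ := hR.exists_gt (max x (settlingModulus g A x))
  have hc1 : c = 1 := by
    rw [← hc x hx z hz (by omega), settlingColoring, if_pos (by omega)]
  by_contra hlt
  have := hc x hx y hy hxy
  rw [settlingColoring, if_neg hlt, hc1] at this
  exact absurd this (by decide)

end Modulus

open Nat.Partrec (Code)

def haltsWithin (s n : ℕ) : Bool :=
  (Code.evaln s (Denumerable.ofNat Code n) n).isSome

theorem computable₂_haltsWithin : Computable₂ haltsWithin :=
  (Primrec.option_isSome.comp (Code.primrec_evaln.comp
    ((Primrec.fst.pair ((Primrec.ofNat Code).comp .snd)).pair .snd))).to_comp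

theorem mem_K_iff_exists_haltsWithin {n : ℕ} : n ∈ K ↔ ∃ s, haltsWithin s n = true := by
  simp only [K, Part.dom_iff_mem, haltsWithin, Option.isSome_iff_exists,
    Code.evaln_complete]
  exact ⟨fun ⟨y, s, h⟩ => ⟨s, y, h⟩, fun ⟨s, y, h⟩ => ⟨y, s, h⟩⟩

theorem haltsWithin_mono {s t n : ℕ} (hst : s ≤ t) (hs : haltsWithin s n = true) :
    haltsWithin t n = true := by
  simp only [haltsWithin, Option.isSome_iff_exists] at hs ⊢
  obtain ⟨y, hy⟩ := hs
  exact ⟨y, Code.evaln_mono hst hy⟩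

theorem eventually_haltsWithin_iff (n : ℕ) :
    ∀ᶠ s in Filter.atTop, haltsWithin s n = true ↔ n ∈ K := by
  by_cases hn : n ∈ K
  · obtain ⟨s₀, hs₀⟩ := mem_K_iff_exists_haltsWithin.1 hn
    filter_upwards [Filter.eventually_ge_atTop s₀] with s hs
    exact iff_of_true (haltsWithin_mono hs hs₀) hn
  · exact .of_forall fun s =>
      iff_of_false (fun h => hn (mem_K_iff_exists_haltsWithin.2 ⟨s, h⟩)) hn

/-- There is a stable 2-coloring of pairs such that every infinite increasing
p-homogeneous set for it computes `∅′`. -/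
theorem exists_stable_coloring_increasing_phom_computes_halting :
    ∃ f : ℕ → ℕ → Fin 2,
      (∀ x : ℕ, ∃ j : Fin 2, ∃ N : ℕ, ∀ u, N ≤ u → f x u = j) ∧
      ∀ HL HR : Set ℕ, HL.Infinite → HR.Infinite →
        (∃ c : Fin 2, ∀ x ∈ HL, ∀ y ∈ HR, x < y → f x y = c) →
        TuringLE K (setJoin HL HR) := by
  refine ⟨settlingColoring haltsWithin K, settlingColoring_stable haltsWithin K,
    fun HL HR hL hR ⟨c, hc⟩ => ?_⟩
  refine turingLE_setJoin_of_correct_stages computable₂_haltsWithin hL hR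
    fun x hx y hy hxy => ?_
  exact settlingModulus_spec haltsWithin K eventually_haltsWithin_iff
    (settlingModulus_le_of_homogeneous haltsWithin K hR hc hx hy hxy)
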